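/- The quotient ring ℤ[x]/((x − 1)(x² + 2x − 1)) is isomorphic, as a ring, to the subring {(a, b + c√2) ∈ ℤ × ℤ[√2] : a, b, c ∈ ℤ, a ≡ b (mod 2)} of ℤ × ℤ[√2], via an isomorphism sending the class of x to (1, −1 + √2). -/

import Mathlib

/-!
Evaluating at `1` and at `α = -1 + √2` gives a ring map `ℤ[x] → ℤ × ℤ[√2]`. Reducing modulo `2`
with `√2 ↦ 0` is a ring map `ℤ[√2] → 𝔽₂` sending `α` to `1`, so both coordinates of the image
of `p` reduce to `p(1) mod 2`: the image lies in the subring. If `p(α) = 0`, then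
`x² + 2x - 1 ∣ p` because `1, α` are `ℤ`-independent; writing `p = (x² + 2x - 1) q`, the
condition `p(1) = 2 q(1) = 0` gives `x - 1 ∣ q`. Conversely `(a, b + c√2)` with `a ≡ b (mod 2)` is
the image of `b + c (x + 1) + (m - c) (x² + 2x - 1)`, where `a - b = 2m`.
-/

open Polynomial

private lemma modeq_iff (a b : ℤ) : a ≡ b [ZMOD 2] ↔ ((a : ZMod 2) = b) :=
  (ZMod.intCast_eq_intCast_iff a b 2).symm

/-- The subring `{(a, b + c√2) ∈ ℤ × ℤ[√2] : a ≡ b (mod 2)}` of `ℤ × ℤ[√2]`. -/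
def W2 : Subring (ℤ × Zsqrtd 2) where
  carrier := {p | p.1 ≡ p.2.re [ZMOD 2]}
  zero_mem' := by decide
  one_mem' := by decide
  add_mem' := by
    intro a b ha hb
    exact ha.add hb
  neg_mem' := by
    intro a ha
    exact ha.neg
  mul_mem' := by
    intro a b ha hb
    simp only [Set.mem_setOf_eq, Prod.fst_mul, Prod.snd_mul, Zsqrtd.re_mul,
      modeq_iff] at ha hb ⊢
    push_cast at ha hb ⊢
    rw [← ha, ← hb, show ((2 : ZMod 2)) = 0 from rfl]
    ring

/-- The ideal `((x − 1)(x² + 2x − 1))` of `ℤ[x]`. -/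
noncomputable def I39 : Ideal (Polynomial ℤ) :=
  Ideal.span {(X - 1) * (X ^ 2 + 2 * X - 1)}

theorem Polynomial.Monic.dvd_of_aeval_eq_zero {R A : Type*} [CommRing R] [Nontrivial R] [Ring A]
    [Algebra R A] {g p : R[X]} {x : A} (hg : g.Monic) (hgx : aeval x g = 0)
    (hx : ∀ r : R[X], r.degree < g.degree → aeval x r = 0 → r = 0) (hp : aeval x p = 0) :
    g ∣ p := by
  rw [← modByMonic_eq_zero_iff_dvd hg]
  exact hx _ (degree_modByMonic_lt p hg) (by rw [aeval_modByMonic_eq_self_of_root hgx, hp])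

namespace Zsqrtd

def reMod (n : ℕ) {d : ℤ} (hd : (n : ℤ) ∣ d) : ℤ√d →+* ZMod n :=
  lift ⟨0, by rw [mul_zero, eq_comm, ZMod.intCast_zmod_eq_zero_iff_dvd]; exact hd⟩

@[simp]
lemma reMod_apply (n : ℕ) {d : ℤ} (hd : (n : ℤ) ∣ d) (z : ℤ√d) : reMod n hd z = z.re := by
  simp [reMod]

end Zsqrtd

local notation "α" => (⟨-1, 1⟩ : Zsqrtd 2)

lemma mem_W2_iff (w : ℤ × ℤ√2) : w ∈ W2 ↔ (w.1 : ZMod 2) = Zsqrtd.reMod 2 dvd_rfl w.2 := by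
  rw [Zsqrtd.reMod_apply]
  exact modeq_iff _ _

lemma aeval_alpha : aeval α (X ^ 2 + 2 * X - 1 : ℤ[X]) = 0 := by
  simp only [map_sub, map_add, map_mul, map_pow, aeval_X, map_ofNat, map_one]
  decide

lemma eq_zero_of_aeval_alpha_eq_zero (r : ℤ[X]) (hr : r.degree < 2) (h : aeval α r = 0) :
    r = 0 := by
  rw [eq_X_add_C_of_degree_le_one (Order.le_of_lt_succ hr)] at h ⊢
  simp only [eq_intCast, map_add, map_mul, map_intCast, aeval_X, Zsqrtd.ext_iff, Zsqrtd.re_add,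
    Zsqrtd.re_mul, Zsqrtd.im_add, Zsqrtd.im_mul, Zsqrtd.re_intCast, Zsqrtd.im_intCast,
    Zsqrtd.re_zero, Zsqrtd.im_zero] at h
  have h1 : r.coeff 1 = 0 := by omega
  have h0 : r.coeff 0 = 0 := by omega
  simp [h0, h1]

noncomputable def evalOneAlpha : ℤ[X] →+* ℤ × ℤ√2 :=
  (evalRingHom 1).prod (aeval α).toRingHom

lemma evalOneAlpha_mem (p : ℤ[X]) : evalOneAlpha p ∈ W2 := by
  have h : (Int.castRingHom (ZMod 2)).comp (evalRingHom 1) =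
      (Zsqrtd.reMod 2 dvd_rfl).comp (aeval α).toRingHom := by
    ext <;> simp
  rw [mem_W2_iff]
  exact congr($h p)

lemma X_sub_one_mul_dvd_of_eval_one_eq_zero {p : ℤ[X]} (h1 : p.eval 1 = 0)
    (hα : aeval α p = 0) : (X - 1) * (X ^ 2 + 2 * X - 1) ∣ p := by
  have hmonic : (X ^ 2 + 2 * X - 1 : ℤ[X]).Monic := by monicity!
  have hdeg : (X ^ 2 + 2 * X - 1 : ℤ[X]).degree = 2 := by compute_degree!
  obtain ⟨q, rfl⟩ := hmonic.dvd_of_aeval_eq_zero aeval_alpha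
    (fun r hr => eq_zero_of_aeval_alpha_eq_zero r (hdeg ▸ hr)) hα
  have hq : q.IsRoot 1 := by
    -- `x² + 2x - 1` takes the value `2` at `1`, and `2` is not a zero divisor in `ℤ`.
    simpa using h1
  rw [mul_comm (X - 1)]
  exact mul_dvd_mul_left _ (by simpa using dvd_iff_isRoot.mpr hq)

lemma ker_evalOneAlpha : RingHom.ker evalOneAlpha = I39 := by
  ext p
  rw [RingHom.mem_ker, I39, Ideal.mem_span_singleton]
  constructor
  · intro h
    exact X_sub_one_mul_dvd_of_eval_one_eq_zero congr($h.1) congr($h.2)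
  · rintro ⟨q, rfl⟩
    refine Prod.ext (by simp [evalOneAlpha]) ?_
    change aeval α _ = 0
    rw [map_mul, map_mul, aeval_alpha, mul_zero, zero_mul]

lemma exists_evalOneAlpha_eq_of_mem (w : ℤ × ℤ√2) (hw : w ∈ W2) : ∃ p, evalOneAlpha p = w := by
  obtain ⟨⟨a, z⟩, hw⟩ := w, hw
  obtain ⟨k, hk⟩ := hw.symm.dvd
  refine ⟨C z.re + C z.im * (X + 1) + C (k - z.im) * (X ^ 2 + 2 * X - 1), ?_⟩
  refine Prod.ext ?_ ?_
  · change eval 1 _ = a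
    simp only [eval_add, eval_sub, eval_mul, eval_pow, eval_C, eval_X, eval_one, eval_ofNat]
    linarith
  · change aeval α _ = z
    rw [map_add, map_mul, aeval_alpha, mul_zero, add_zero]
    simp [Zsqrtd.ext_iff]

/-- `ℤ[x]/((x − 1)(x² + 2x − 1))` is isomorphic as a ring to the subring
`{(a, b + c√2) : a ≡ b (mod 2)}` of `ℤ × ℤ[√2]`, via an isomorphism sending the class of
`x` to `(1, −1 + √2)`. -/
theorem stmt15 :
    ∃ e : (Polynomial ℤ ⧸ I39) ≃+* W2,
      ((e (Ideal.Quotient.mk I39 X) : ℤ × Zsqrtd 2)) = ((1 : ℤ), (⟨-1, 1⟩ : Zsqrtd 2)) := by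
  let φ : ℤ[X] →+* W2 := evalOneAlpha.codRestrict W2 evalOneAlpha_mem
  have hφ : Function.Surjective φ := fun w => by
    obtain ⟨p, hp⟩ := exists_evalOneAlpha_eq_of_mem w w.2
    exact ⟨p, Subtype.ext hp⟩
  have hker : I39 = RingHom.ker φ := by
    rw [← ker_evalOneAlpha]
    ext p
    simp [φ, Subtype.ext_iff]
  refine ⟨(Ideal.quotEquivOfEq hker).trans (RingHom.quotientKerEquivOfSurjective hφ), ?_⟩
  change evalOneAlpha X = _
  simp [evalOneAlpha]
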